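/- arXiv:2406.05781 — 2 statements merged into one kernel-verified Lean document; each statement's English description precedes it below -/
import Mathlib

section
/- Let (H_1,E_1) and (H_2,E_2) be simplicial semigroups of ranks r_1 and r_2, each satisfying the CM condition. Let H = H_1 × H_2 ⊆ ℤ^{r_1+r_2} and E = (E_1 × {0}) ∪ ({0} × E_2). Then (H,E) has an AG witness if and only if either (1) type H_1 = type H_2 = 1, or (2) (H_1,E_1) has an AG witness and H_2 = ℕE_2 (i.e., H_2 is the free monoid generated by its extreme rays), or symmetrically (H_2,E_2) has an AG witness and H_1 = ℕE_1. (By the paper's main theorem, having an AG witness is equivalent to being an AG semigroup.) -/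
/-!
The Apéry set and the socle of `H₁ × H₂` are the products of those of the factors.
Let `(w₁, w₂)` be an AG witness of the product and suppose the socle of `H₁` contains some
`a₁ ≠ w₁`. Then `w₁ - a₁ ∉ H₁`, so by condition (i) every `(a₁, a₂)` with `a₂ ∈ Ap(H₂)` lies in
the socle, and condition (ii) applied to `(a₁, a₂)` forces `a₂ = w₂`. Since `0 ∈ Ap(H₂)`, this
gives `Ap(H₂) = {0}`, which under the CM condition means `H₂ = ℕE₂`; and when `Ap(H₂) = {0}` the
witness conditions for `(w₁, 0)` in the product and for `w₁` in `H₁` coincide. If both socles are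
singletons, every Apéry element lies below the unique socle element (the Apéry sets are finite),
which makes that element a witness. The other factor is handled by swapping the two blocks.
-/

open scoped Classical

namespace AGpaper

/-- `(H, E)` is a simplicial semigroup of rank `d` with extreme rays `b : Fin d → ℤ^N`. -/
def IsSimplicial (N d : ℕ) (H : AddSubmonoid (Fin N → ℤ)) (b : Fin d → (Fin N → ℤ)) : Prop :=
  H.FG ∧ (∀ i, b i ∈ H) ∧
  LinearIndependent ℚ (fun i : Fin d => (fun j : Fin N => ((b i j : ℚ)))) ∧
  (∃ n : ℕ, 0 < n ∧ ∀ x ∈ H, ∃ c : Fin d → ℕ, (n : ℤ) • x = ∑ i, (c i : ℤ) • b i)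

/-- The Apéry set w.r.t. a general family of extreme rays. -/
def aperyG {N d : ℕ} (H : AddSubmonoid (Fin N → ℤ)) (b : Fin d → (Fin N → ℤ)) :
    Set (Fin N → ℤ) :=
  {x | x ∈ H ∧ ∀ i : Fin d, x - b i ∉ H}

/-- The socle w.r.t. a general family of extreme rays. -/
def socG {N d : ℕ} (H : AddSubmonoid (Fin N → ℤ)) (b : Fin d → (Fin N → ℤ)) :
    Set (Fin N → ℤ) :=
  {x | x ∈ aperyG H b ∧ ∀ y ∈ aperyG H b, y - x ∈ H → x = y}

/-- Concatenation `ℤ^{r₁} × ℤ^{r₂} →+ ℤ^{r₁+r₂}` as an additive monoid homomorphism. -/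
def appendHom (r₁ r₂ : ℕ) : ((Fin r₁ → ℤ) × (Fin r₂ → ℤ)) →+ (Fin (r₁ + r₂) → ℤ) where
  toFun p := Fin.append p.1 p.2
  map_zero' := by
    funext i
    refine Fin.addCases (fun j => ?_) (fun j => ?_) i <;>
      simp [Fin.append_left, Fin.append_right]
  map_add' p q := by
    funext i
    refine Fin.addCases (fun j => ?_) (fun j => ?_) i <;>
      simp [Fin.append_left, Fin.append_right]

/-- The product semigroup `H = H₁ × H₂ ⊆ ℤ^{r₁+r₂}`. -/
def prodSg {r₁ r₂ : ℕ} (H₁ : AddSubmonoid (Fin r₁ → ℤ)) (H₂ : AddSubmonoid (Fin r₂ → ℤ)) :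
    AddSubmonoid (Fin (r₁ + r₂) → ℤ) :=
  AddSubmonoid.map (appendHom r₁ r₂) (H₁.prod H₂)

/-- The extreme rays `E = (E₁ × {0}) ∪ ({0} × E₂)` of the product. -/
def prodRays {r₁ r₂ : ℕ} (b₁ : Fin r₁ → (Fin r₁ → ℤ)) (b₂ : Fin r₂ → (Fin r₂ → ℤ)) :
    Fin (r₁ + r₂) → (Fin (r₁ + r₂) → ℤ) :=
  Fin.addCases (fun i => Fin.append (b₁ i) 0) (fun j => Fin.append 0 (b₂ j))

/-- The CM condition w.r.t. a general family of extreme rays. -/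
def CMG {N d : ℕ} (H : AddSubmonoid (Fin N → ℤ)) (b : Fin d → (Fin N → ℤ)) : Prop :=
  ∀ g ∈ AddSubgroup.closure (H : Set (Fin N → ℤ)),
    ∃! a, a ∈ aperyG H b ∧ ∃ c : Fin d → ℤ, g - a = ∑ i, c i • b i

/-- An AG witness w.r.t. a general family of extreme rays. -/
def AGwitnessG {N d : ℕ} (H : AddSubmonoid (Fin N → ℤ)) (b : Fin d → (Fin N → ℤ))
    (w : Fin N → ℤ) : Prop :=
  w ∈ socG H b ∧
  (∀ h ∈ aperyG H b, ((h ∈ socG H b ∧ h ≠ w) ↔ w - h ∉ H)) ∧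
  (∀ h ∈ socG H b, h ≠ w → ∃ i : Fin d, ∃ h' ∈ socG H b, h + h' = w + b i)

section Simplicial

variable {N d : ℕ} {H : AddSubmonoid (Fin N → ℤ)} {b : Fin d → (Fin N → ℤ)}

theorem IsSimplicial.linearIndependent (hs : IsSimplicial N d H b) :
    LinearIndependent ℤ b := by
  have hℤ : LinearIndependent ℤ fun i j => (b i j : ℚ) := hs.2.2.1.restrict_scalars' ℤ
  exact hℤ.of_comp ((Int.castAddHom ℚ).toIntLinearMap.compLeft (Fin N))

theorem IsSimplicial.eq_zero_of_mem_of_neg_mem (hs : IsSimplicial N d H b) {x : Fin N → ℤ}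
    (hx : x ∈ H) (hx' : -x ∈ H) : x = 0 := by
  have hli := hs.linearIndependent
  obtain ⟨-, -, -, n, hn, hrep⟩ := hs
  obtain ⟨c, hc⟩ := hrep x hx
  obtain ⟨c', hc'⟩ := hrep (-x) hx'
  have hsum : ∑ i, ((c i : ℤ) + c' i) • b i = 0 := by
    simp only [add_smul, Finset.sum_add_distrib, ← hc, ← hc', smul_neg, add_neg_cancel]
  have hc0 : ∀ i, (c i : ℤ) = 0 := fun i => by
    have := Fintype.linearIndependent_iff.1 hli _ hsum i
    omega
  have hnx : (n : ℤ) • x = 0 := by simp [hc, hc0]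
  exact (smul_eq_zero.1 hnx).resolve_left (by exact_mod_cast hn.ne')

theorem IsSimplicial.zero_mem_aperyG (hs : IsSimplicial N d H b) :
    (0 : Fin N → ℤ) ∈ aperyG H b :=
  ⟨H.zero_mem, fun i hi => hs.linearIndependent.ne_zero i
    (neg_eq_zero.1 (hs.eq_zero_of_mem_of_neg_mem (by simpa using hi) (by simpa using hs.2.1 i)))⟩

theorem IsSimplicial.coeff_nonneg (hs : IsSimplicial N d H b) {x : Fin N → ℤ} (hx : x ∈ H)
    {c : Fin d → ℤ} (hc : x = ∑ i, c i • b i) (i : Fin d) : 0 ≤ c i := by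
  have hli := hs.linearIndependent
  obtain ⟨-, -, -, n, hn, hrep⟩ := hs
  obtain ⟨e, he⟩ := hrep x hx
  have hsum : ∑ i, ((n : ℤ) * c i) • b i = ∑ i, (e i : ℤ) • b i := by
    simp only [← he, hc, Finset.smul_sum, smul_smul]
  have hce : (n : ℤ) * c i = e i :=
    Fintype.linearIndependent_iffₛ.1 hli _ _ hsum i
  have hn' : (0 : ℤ) < n := by exact_mod_cast hn
  nlinarith [(e i).cast_nonneg (α := ℤ)]

theorem exists_sub_mem_of_mem_closure_range {x : Fin N → ℤ}
    (hx : x ∈ AddSubmonoid.closure (Set.range b)) (hx0 : x ≠ 0) :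
    ∃ i, x - b i ∈ AddSubmonoid.closure (Set.range b) := by
  induction hx using AddSubmonoid.closure_induction with
  | mem y hy =>
    obtain ⟨i, rfl⟩ := hy
    exact ⟨i, by simp⟩
  | zero => exact absurd rfl hx0
  | add y z hy hz ihy ihz =>
    by_cases hy0 : y = 0
    · subst hy0
      simpa using ihz (by simpa using hx0)
    · obtain ⟨i, hi⟩ := ihy hy0
      exact ⟨i, by simpa [sub_add_eq_add_sub] using AddSubmonoid.add_mem _ hi hz⟩

theorem aperyG_eq_zero_of_free (hs : IsSimplicial N d H b)
    (hfree : H = AddSubmonoid.closure (Set.range b)) : aperyG H b = {0} := by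
  refine Set.eq_singleton_iff_unique_mem.2 ⟨hs.zero_mem_aperyG, fun x ⟨hx, hxb⟩ => ?_⟩
  by_contra hx0
  obtain ⟨i, hi⟩ := exists_sub_mem_of_mem_closure_range (hfree ▸ hx) hx0
  exact hxb i (hfree ▸ hi)

theorem free_of_aperyG_eq_zero (hs : IsSimplicial N d H b) (hCM : CMG H b)
    (hap : aperyG H b = {0}) : H = AddSubmonoid.closure (Set.range b) := by
  refine le_antisymm (fun x hx => ?_) (AddSubmonoid.closure_le.2 (Set.range_subset_iff.2 hs.2.1))
  obtain ⟨a, ⟨ha, c, hc⟩, -⟩ := hCM x (AddSubgroup.subset_closure hx)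
  rw [hap, Set.mem_singleton_iff] at ha
  rw [ha, sub_zero] at hc
  rw [hc]
  refine AddSubmonoid.sum_mem _ fun i _ => ?_
  rw [← Int.toNat_of_nonneg (hs.coeff_nonneg hx hc i), natCast_zsmul]
  exact AddSubmonoid.nsmul_mem _ (AddSubmonoid.subset_closure (Set.mem_range_self i)) _

theorem eq_of_mem_socG_of_add_eq {x y h : Fin N → ℤ} (hx : x ∈ socG H b) (hy : y ∈ aperyG H b)
    (hh : h ∈ H) (hxy : x + h = y) : x = y :=
  hx.2 y hy (by rwa [← hxy, add_sub_cancel_left])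

theorem CMG.eq_of_sub_eq_sum (hCM : CMG H b) {a a' : Fin N → ℤ} (ha : a ∈ aperyG H b)
    (ha' : a' ∈ aperyG H b) {m : Fin d → ℤ} (hm : a - a' = ∑ i, m i • b i) : a = a' :=
  (hCM a (AddSubgroup.subset_closure ha.1)).unique ⟨ha, 0, by simp⟩ ⟨ha', m, hm⟩

theorem aperyG_finite (hs : IsSimplicial N d H b) (hCM : CMG H b) : (aperyG H b).Finite := by
  obtain ⟨-, -, -, n, hn, hrep⟩ := hs
  have : NeZero n := ⟨hn.ne'⟩
  rw [← Set.finite_coe_iff]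
  choose c hc using fun a : aperyG H b => hrep a a.2.1
  -- `n • a` modulo `n • ℤE` determines `a`, since by CM distinct Apéry elements differ modulo `ℤE`
  refine Finite.of_injective (fun a i => ((c a i : ℤ) : ZMod n)) fun a a' haa' => ?_
  choose m hm using fun i => (ZMod.intCast_eq_intCast_iff_dvd_sub _ _ _).1 (congrFun haa' i)
  have hnsub : (n : ℤ) • ((a' : Fin N → ℤ) - a) = (n : ℤ) • ∑ i, m i • b i := by
    simp only [smul_sub, hc, Finset.smul_sum, smul_smul, ← Finset.sum_sub_distrib, ← sub_smul, hm]
  exact Subtype.ext (hCM.eq_of_sub_eq_sum a'.2 a.2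
    (smul_right_injective _ (by exact_mod_cast hn.ne') hnsub)).symm

theorem exists_mem_socG_sub_mem (hs : IsSimplicial N d H b) (hCM : CMG H b) {a : Fin N → ℤ}
    (ha : a ∈ aperyG H b) : ∃ s ∈ socG H b, s - a ∈ H := by
  let above (x y : Fin N → ℤ) : Prop := x - y ∈ H ∧ x ≠ y
  have : IsStrictOrder _ above :=
    { irrefl := fun x h => h.2 rfl
      trans := fun x y z hxy hyz => ⟨by simpa using H.add_mem hxy.1 hyz.1, fun hxz => hxy.2 <|
        sub_eq_zero.1 (hs.eq_zero_of_mem_of_neg_mem hxy.1 (by simpa [hxz] using hyz.1))⟩ }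
  obtain ⟨s, ⟨hsA, hsa⟩, hmax⟩ := (Set.wellFoundedOn_iff.1 ((aperyG_finite hs hCM).wellFoundedOn
    (r := above))).has_min {x | x ∈ aperyG H b ∧ x - a ∈ H} ⟨a, ha, by simp⟩
  refine ⟨s, ⟨hsA, fun y hy hys => ?_⟩, hsa⟩
  by_contra hne
  exact hmax y ⟨hy, by simpa using H.add_mem hys hsa⟩ ⟨⟨hys, Ne.symm hne⟩, hy, hsA⟩

theorem socG_eq_of_aperyG_eq_singleton {a : Fin N → ℤ} (hap : aperyG H b = {a}) :
    socG H b = {a} := by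
  ext x
  simp +contextual [socG, hap]

theorem agWitnessG_of_socG_eq_singleton
    (habove : ∀ a ∈ aperyG H b, ∃ s ∈ socG H b, s - a ∈ H) {w : Fin N → ℤ}
    (hw : socG H b = {w}) : AGwitnessG H b w := by
  refine ⟨hw ▸ rfl, fun h hh => ?_, fun h hh hne => (hne (by simpa [hw] using hh)).elim⟩
  obtain ⟨s, hs, hsh⟩ := habove h hh
  rw [hw, Set.mem_singleton_iff] at hs
  simp [hw, hs ▸ hsh]

end Simplicial

section Transport

variable {N N' d d' : ℕ} {H : AddSubmonoid (Fin N → ℤ)} {H' : AddSubmonoid (Fin N' → ℤ)}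
  {b : Fin d → (Fin N → ℤ)} {b' : Fin d' → (Fin N' → ℤ)}

theorem map_mem_aperyG_iff (e : (Fin N → ℤ) ≃+ (Fin N' → ℤ)) (σ : Fin d ≃ Fin d')
    (hH : ∀ x, e x ∈ H' ↔ x ∈ H) (hb : ∀ i, b' (σ i) = e (b i)) {x : Fin N → ℤ} :
    e x ∈ aperyG H' b' ↔ x ∈ aperyG H b := by
  simp only [aperyG, Set.mem_ofPred_eq, σ.surjective.forall, hb, ← map_sub, hH]

theorem map_mem_socG_iff (e : (Fin N → ℤ) ≃+ (Fin N' → ℤ)) (σ : Fin d ≃ Fin d')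
    (hH : ∀ x, e x ∈ H' ↔ x ∈ H) (hb : ∀ i, b' (σ i) = e (b i)) {x : Fin N → ℤ} :
    e x ∈ socG H' b' ↔ x ∈ socG H b := by
  simp only [socG, Set.mem_ofPred_eq, e.surjective.forall, map_mem_aperyG_iff e σ hH hb, ← map_sub,
    hH, e.injective.eq_iff]

theorem map_agWitnessG_iff (e : (Fin N → ℤ) ≃+ (Fin N' → ℤ)) (σ : Fin d ≃ Fin d')
    (hH : ∀ x, e x ∈ H' ↔ x ∈ H) (hb : ∀ i, b' (σ i) = e (b i)) {w : Fin N → ℤ} :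
    AGwitnessG H' b' (e w) ↔ AGwitnessG H b w := by
  simp only [AGwitnessG, e.surjective.forall, e.surjective.exists, σ.surjective.exists,
    map_mem_aperyG_iff e σ hH hb, map_mem_socG_iff e σ hH hb, ← map_sub, ← map_add, hH, hb,
    e.injective.eq_iff, ne_eq]

end Transport

section Product

variable {r₁ r₂ : ℕ} {H₁ : AddSubmonoid (Fin r₁ → ℤ)} {H₂ : AddSubmonoid (Fin r₂ → ℤ)}
  {b₁ : Fin r₁ → (Fin r₁ → ℤ)} {b₂ : Fin r₂ → (Fin r₂ → ℤ)}

def appendAddEquiv : (Fin r₁ → ℤ) × (Fin r₂ → ℤ) ≃+ (Fin (r₁ + r₂) → ℤ) :=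
  { Fin.appendEquiv r₁ r₂ with map_add' := (appendHom r₁ r₂).map_add }

@[simp]
theorem appendAddEquiv_mem_prodSg {p : Fin r₁ → ℤ} {q : Fin r₂ → ℤ} :
    appendAddEquiv (p, q) ∈ prodSg H₁ H₂ ↔ p ∈ H₁ ∧ q ∈ H₂ :=
  (AddSubmonoid.mem_map_iff_mem (f := appendHom r₁ r₂) (Fin.appendEquiv r₁ r₂).injective).trans
    AddSubmonoid.mem_prod

@[simp]
theorem prodRays_castAdd (j : Fin r₁) :
    prodRays b₁ b₂ (Fin.castAdd r₂ j) = appendAddEquiv (b₁ j, 0) :=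
  Fin.addCases_left j

@[simp]
theorem prodRays_natAdd (j : Fin r₂) :
    prodRays b₁ b₂ (Fin.natAdd r₁ j) = appendAddEquiv (0, b₂ j) :=
  Fin.addCases_right j

theorem appendAddEquiv_mem_aperyG_prod {p : Fin r₁ → ℤ} {q : Fin r₂ → ℤ} :
    appendAddEquiv (p, q) ∈ aperyG (prodSg H₁ H₂) (prodRays b₁ b₂) ↔
      p ∈ aperyG H₁ b₁ ∧ q ∈ aperyG H₂ b₂ := by
  simp only [aperyG, Set.mem_ofPred_eq, Fin.forall_fin_add, prodRays_castAdd, prodRays_natAdd,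
    ← map_sub, Prod.mk_sub_mk, sub_zero, appendAddEquiv_mem_prodSg, not_and]
  constructor
  · rintro ⟨⟨hp, hq⟩, h₁, h₂⟩
    exact ⟨⟨hp, fun i hi => h₁ i hi hq⟩, hq, fun j => h₂ j hp⟩
  · rintro ⟨⟨hp, h₁⟩, hq, h₂⟩
    exact ⟨⟨hp, hq⟩, fun i hi _ => h₁ i hi, fun j _ => h₂ j⟩

theorem appendAddEquiv_mem_socG_prod {p : Fin r₁ → ℤ} {q : Fin r₂ → ℤ} :
    appendAddEquiv (p, q) ∈ socG (prodSg H₁ H₂) (prodRays b₁ b₂) ↔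
      p ∈ socG H₁ b₁ ∧ q ∈ socG H₂ b₂ := by
  simp only [socG, Set.mem_ofPred_eq, appendAddEquiv.surjective.forall, Prod.forall,
    appendAddEquiv_mem_aperyG_prod, ← map_sub, Prod.mk_sub_mk, appendAddEquiv_mem_prodSg,
    appendAddEquiv.injective.eq_iff, Prod.mk.injEq, and_imp]
  constructor
  · rintro ⟨⟨hp, hq⟩, hmax⟩
    exact ⟨⟨hp, fun p' hp' hpp' => (hmax p' q hp' hq hpp' (by simp)).1⟩,
      hq, fun q' hq' hqq' => (hmax p q' hp hq' (by simp) hqq').2⟩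
  · rintro ⟨⟨hp, h₁⟩, hq, h₂⟩
    exact ⟨⟨hp, hq⟩, fun p' q' hp' hq' hpp' hqq' => ⟨h₁ p' hp' hpp', h₂ q' hq' hqq'⟩⟩

theorem exists_fin_add_iff {m n : ℕ} {P : Fin (m + n) → Prop} :
    (∃ i, P i) ↔ (∃ j, P (Fin.castAdd n j)) ∨ ∃ j, P (Fin.natAdd m j) :=
  ⟨fun ⟨i, hi⟩ => Fin.addCases (motive := fun i => P i → _) (fun j h => .inl ⟨j, h⟩)
    (fun j h => .inr ⟨j, h⟩) i hi, fun h => h.elim (fun ⟨_, hj⟩ => ⟨_, hj⟩) fun ⟨_, hj⟩ => ⟨_, hj⟩⟩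

def appendSwap : (Fin (r₁ + r₂) → ℤ) ≃+ (Fin (r₂ + r₁) → ℤ) :=
  (appendAddEquiv.symm.trans (AddEquiv.prodComm)).trans appendAddEquiv

@[simp]
theorem appendSwap_appendAddEquiv (p : Fin r₁ → ℤ) (q : Fin r₂ → ℤ) :
    appendSwap (appendAddEquiv (p, q)) = appendAddEquiv (q, p) := by
  simp [appendSwap]

theorem exists_agWitnessG_prod_comm :
    (∃ w, AGwitnessG (prodSg H₁ H₂) (prodRays b₁ b₂) w) ↔
      ∃ w, AGwitnessG (prodSg H₂ H₁) (prodRays b₂ b₁) w := by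
  have hH : ∀ x, appendSwap x ∈ prodSg H₂ H₁ ↔ x ∈ prodSg H₁ H₂ := by
    simp [appendAddEquiv.surjective.forall, and_comm]
  have hb : ∀ i, prodRays b₂ b₁ (finAddFlip i) = appendSwap (prodRays b₁ b₂ i) := by
    simp [Fin.forall_fin_add, finAddFlip_apply_castAdd, finAddFlip_apply_natAdd]
  calc (∃ w, AGwitnessG (prodSg H₁ H₂) (prodRays b₁ b₂) w)
      ↔ ∃ w, AGwitnessG (prodSg H₂ H₁) (prodRays b₂ b₁) (appendSwap w) := by
        simp only [map_agWitnessG_iff appendSwap finAddFlip hH hb]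
    _ ↔ _ := appendSwap.surjective.exists.symm

theorem agWitnessG_prod_iff_of_aperyG_eq_zero (hap₂ : aperyG H₂ b₂ = {0}) {w₁ : Fin r₁ → ℤ} :
    AGwitnessG (prodSg H₁ H₂) (prodRays b₁ b₂) (appendAddEquiv (w₁, 0)) ↔
      AGwitnessG H₁ b₁ w₁ := by
  have hsoc₂ : socG H₂ b₂ = {0} := socG_eq_of_aperyG_eq_singleton hap₂
  -- so condition (ii) can only use rays of the first factor
  have hb₂ : ∀ j, 0 ≠ b₂ j := fun j hj =>
    (hap₂.symm ▸ Set.mem_singleton 0 : (0 : Fin r₂ → ℤ) ∈ aperyG H₂ b₂).2 j (by simp [← hj])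
  simp [AGwitnessG, appendAddEquiv.surjective.forall, appendAddEquiv.surjective.exists,
    appendAddEquiv_mem_socG_prod, appendAddEquiv_mem_aperyG_prod, hap₂,
    hsoc₂, ← map_sub, ← map_add, exists_fin_add_iff, hb₂]

theorem aperyG_eq_zero_of_agWitnessG_prod (h₂ : IsSimplicial r₂ r₂ H₂ b₂)
    {w₁ a₁ : Fin r₁ → ℤ} {w₂ : Fin r₂ → ℤ}
    (hw : AGwitnessG (prodSg H₁ H₂) (prodRays b₁ b₂) (appendAddEquiv (w₁, w₂)))
    (ha₁ : a₁ ∈ socG H₁ b₁) (hne : a₁ ≠ w₁) : aperyG H₂ b₂ = {0} := by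
  obtain ⟨hwS, hwAp, hwSum⟩ := hw
  obtain ⟨hw₁, hw₂⟩ := appendAddEquiv_mem_socG_prod.1 hwS
  have hsoc₂ : ∀ a₂ ∈ socG H₂ b₂, a₂ = w₂ := by
    intro a₂ ha₂
    by_contra hne₂
    obtain ⟨i, h', hh', heq⟩ := hwSum _ (appendAddEquiv_mem_socG_prod.2 ⟨ha₁, ha₂⟩) (by simp [hne])
    obtain ⟨⟨c₁, c₂⟩, rfl⟩ := appendAddEquiv.surjective h'
    obtain ⟨hh₁, hh₂⟩ := appendAddEquiv_mem_socG_prod.1 hh'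
    cases i using Fin.addCases with
    | left j =>
      simp only [prodRays_castAdd, ← map_add, appendAddEquiv.injective.eq_iff, Prod.mk_add_mk,
        Prod.mk.injEq, add_zero] at heq
      exact hne₂ (eq_of_mem_socG_of_add_eq ha₂ hw₂.1 hh₂.1.1 heq.2)
    | right j =>
      simp only [prodRays_natAdd, ← map_add, appendAddEquiv.injective.eq_iff, Prod.mk_add_mk,
        Prod.mk.injEq, add_zero] at heq
      exact hne (eq_of_mem_socG_of_add_eq ha₁ hw₁.1 hh₁.1.1 heq.1)
  -- `w - (a₁, a₂) ∉ H` already in the first coordinate, so `(a₁, a₂)` lies in the socle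
  have hap₂ : ∀ a₂ ∈ aperyG H₂ b₂, a₂ = w₂ := by
    intro a₂ ha₂
    have hsub : appendAddEquiv (w₁, w₂) - appendAddEquiv (a₁, a₂) ∉ prodSg H₁ H₂ := by
      rw [← map_sub, Prod.mk_sub_mk, appendAddEquiv_mem_prodSg]
      exact fun h => hne (ha₁.2 w₁ hw₁.1 h.1)
    have := (hwAp _ (appendAddEquiv_mem_aperyG_prod.2 ⟨ha₁.1, ha₂⟩)).2 hsub
    exact hsoc₂ a₂ (appendAddEquiv_mem_socG_prod.1 this.1).2
  exact Set.eq_singleton_iff_unique_mem.2 ⟨h₂.zero_mem_aperyG, fun a₂ ha₂ =>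
    (hap₂ a₂ ha₂).trans (hap₂ 0 h₂.zero_mem_aperyG).symm⟩

theorem socG_ncard_eq_one_or_free (h₂ : IsSimplicial r₂ r₂ H₂ b₂) (hCM₂ : CMG H₂ b₂)
    (hw : ∃ w, AGwitnessG (prodSg H₁ H₂) (prodRays b₁ b₂) w) :
    (socG H₁ b₁).ncard = 1 ∨ H₂ = AddSubmonoid.closure (Set.range b₂) := by
  obtain ⟨w, hw⟩ := hw
  obtain ⟨⟨w₁, w₂⟩, rfl⟩ := appendAddEquiv.surjective w
  by_cases hS₁ : socG H₁ b₁ = {w₁}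
  · exact .inl (by rw [hS₁, Set.ncard_singleton])
  · obtain ⟨a₁, ha₁, hne⟩ : ∃ a₁ ∈ socG H₁ b₁, a₁ ≠ w₁ := by
      by_contra! h
      exact hS₁ (Set.eq_singleton_iff_unique_mem.2 ⟨(appendAddEquiv_mem_socG_prod.1 hw.1).1, h⟩)
    exact .inr (free_of_aperyG_eq_zero h₂ hCM₂ (aperyG_eq_zero_of_agWitnessG_prod h₂ hw ha₁ hne))

theorem exists_agWitnessG_prod_iff_of_free (h₂ : IsSimplicial r₂ r₂ H₂ b₂)
    (hfree : H₂ = AddSubmonoid.closure (Set.range b₂)) :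
    (∃ w, AGwitnessG (prodSg H₁ H₂) (prodRays b₁ b₂) w) ↔ ∃ w, AGwitnessG H₁ b₁ w := by
  have hap₂ := aperyG_eq_zero_of_free h₂ hfree
  constructor
  · rintro ⟨w, hw⟩
    obtain ⟨⟨w₁, w₂⟩, rfl⟩ := appendAddEquiv.surjective w
    obtain rfl : w₂ = 0 := by simpa [hap₂] using (appendAddEquiv_mem_socG_prod.1 hw.1).2.1
    exact ⟨w₁, (agWitnessG_prod_iff_of_aperyG_eq_zero hap₂).1 hw⟩
  · rintro ⟨w₁, hw₁⟩
    exact ⟨_, (agWitnessG_prod_iff_of_aperyG_eq_zero hap₂).2 hw₁⟩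

theorem exists_agWitnessG_prod_of_socG_ncard_eq_one (h₁ : IsSimplicial r₁ r₁ H₁ b₁)
    (h₂ : IsSimplicial r₂ r₂ H₂ b₂) (hCM₁ : CMG H₁ b₁) (hCM₂ : CMG H₂ b₂)
    (hS₁ : (socG H₁ b₁).ncard = 1) (hS₂ : (socG H₂ b₂).ncard = 1) :
    ∃ w, AGwitnessG (prodSg H₁ H₂) (prodRays b₁ b₂) w := by
  obtain ⟨w₁, hS₁⟩ := Set.ncard_eq_one.1 hS₁
  obtain ⟨w₂, hS₂⟩ := Set.ncard_eq_one.1 hS₂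
  refine ⟨appendAddEquiv (w₁, w₂), agWitnessG_of_socG_eq_singleton (fun a ha => ?_) ?_⟩
  · obtain ⟨⟨p, q⟩, rfl⟩ := appendAddEquiv.surjective a
    obtain ⟨hp, hq⟩ := appendAddEquiv_mem_aperyG_prod.1 ha
    obtain ⟨s₁, hs₁, hps⟩ := exists_mem_socG_sub_mem h₁ hCM₁ hp
    obtain ⟨s₂, hs₂, hqs⟩ := exists_mem_socG_sub_mem h₂ hCM₂ hq
    exact ⟨appendAddEquiv (s₁, s₂), appendAddEquiv_mem_socG_prod.2 ⟨hs₁, hs₂⟩,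
      by simpa [← map_sub] using ⟨hps, hqs⟩⟩
  · ext x
    obtain ⟨⟨p, q⟩, rfl⟩ := appendAddEquiv.surjective x
    simp [appendAddEquiv_mem_socG_prod, hS₁, hS₂]

end Product

/-- For Cohen–Macaulay simplicial semigroups `(H₁,E₁)`, `(H₂,E₂)`, the
product has an AG witness iff either both types are `1`, or one factor has an AG witness
and the other is the free monoid on its extreme rays. -/
theorem product_AG_iff {r₁ r₂ : ℕ}
    (H₁ : AddSubmonoid (Fin r₁ → ℤ)) (b₁ : Fin r₁ → (Fin r₁ → ℤ))
    (H₂ : AddSubmonoid (Fin r₂ → ℤ)) (b₂ : Fin r₂ → (Fin r₂ → ℤ))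
    (h₁ : IsSimplicial r₁ r₁ H₁ b₁) (h₂ : IsSimplicial r₂ r₂ H₂ b₂)
    (hCM₁ : CMG H₁ b₁) (hCM₂ : CMG H₂ b₂) :
    (∃ w, AGwitnessG (prodSg H₁ H₂) (prodRays b₁ b₂) w) ↔
      ((socG H₁ b₁).ncard = 1 ∧ (socG H₂ b₂).ncard = 1) ∨
      ((∃ w, AGwitnessG H₁ b₁ w) ∧ H₂ = AddSubmonoid.closure (Set.range b₂)) ∨
      ((∃ w, AGwitnessG H₂ b₂ w) ∧ H₁ = AddSubmonoid.closure (Set.range b₁)) := by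
  constructor
  · intro hw
    have hw' := exists_agWitnessG_prod_comm.1 hw
    rcases socG_ncard_eq_one_or_free h₂ hCM₂ hw with hS₁ | hfree₂
    · rcases socG_ncard_eq_one_or_free h₁ hCM₁ hw' with hS₂ | hfree₁
      · exact .inl ⟨hS₁, hS₂⟩
      · exact .inr (.inr ⟨(exists_agWitnessG_prod_iff_of_free h₁ hfree₁).1 hw', hfree₁⟩)
    · exact .inr (.inl ⟨(exists_agWitnessG_prod_iff_of_free h₂ hfree₂).1 hw, hfree₂⟩)
  · rintro (⟨hS₁, hS₂⟩ | ⟨hw₁, hfree₂⟩ | ⟨hw₂, hfree₁⟩)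
    · exact exists_agWitnessG_prod_of_socG_ncard_eq_one h₁ h₂ hCM₁ hCM₂ hS₁ hS₂
    · exact (exists_agWitnessG_prod_iff_of_free h₂ hfree₂).2 hw₁
    · exact exists_agWitnessG_prod_comm.2 ((exists_agWitnessG_prod_iff_of_free h₁ hfree₁).2 hw₂)

end AGpaper
end

section
/- Let (H,E) be an orthogonal semigroup of order m and rank d satisfying the CM condition, with |Ap(H,E)| = m, and suppose that for each 1 ≤ i ≤ d the projection H_i = {σ_i(h) : h ∈ H} ⊆ ℕ is a numerical semigroup (i.e., gcd of its elements is 1; note m ∈ H_i). Suppose type H = 2 and H is an AG semigroup of type two; concretely, Soc(H,E) = {u, v} with u ≠ v, there exists an index i with v + m·e_i = 2u, and w ≤_H v for every w ∈ Ap(H,E)\{u}. Then for every 1 ≤ j ≤ d the numerical semigroup H_j is an AG semigroup of type at most two, i.e., H_j is symmetric or pseudo-symmetric: either |Soc(H_j,{m})| = 1, or Soc(H_j,{m}) = {s, z} with s ≠ z and 2s = z + m. -/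
open scoped Classical

namespace AGpaper

/-- An orthogonal semigroup of order `m` in `ℕ^d`. -/
def IsOrthogonal (d m : ℕ) (H : AddSubmonoid (Fin d → ℤ)) : Prop :=
  H.FG ∧
  (∀ x ∈ H, ∀ i, 0 ≤ x i) ∧
  (∀ i : Fin d, Pi.single i (m : ℤ) ∈ H) ∧
  (∃ n : ℕ, 0 < n ∧ ∀ x ∈ H, ∀ i, (m : ℤ) ∣ (n : ℤ) * x i) ∧
  (∀ i : Fin d, ∀ m' : ℕ, 0 < m' → m' < m → Pi.single i (m' : ℤ) ∉ H)

/-- Membership in `ℤE = ℤ(m e₁) + ⋯ + ℤ(m e_d)`. -/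
def inZE (d m : ℕ) (x : Fin d → ℤ) : Prop := ∀ i : Fin d, (m : ℤ) ∣ x i

/-- The Apéry set of an orthogonal semigroup w.r.t. its extreme rays `m eᵢ`. -/
def apery (d m : ℕ) (H : AddSubmonoid (Fin d → ℤ)) : Set (Fin d → ℤ) :=
  {x | x ∈ H ∧ ∀ i : Fin d, x - Pi.single i (m : ℤ) ∉ H}

/-- The socle: maximal elements of the Apéry set with respect to `≤_H`. -/
def soc (d m : ℕ) (H : AddSubmonoid (Fin d → ℤ)) : Set (Fin d → ℤ) :=
  {x | x ∈ apery d m H ∧ ∀ y ∈ apery d m H, y - x ∈ H → x = y}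

/-- The CM condition: every element of `G(H)` is uniquely `a + z`, `a ∈ Ap(H,E)`, `z ∈ ℤE`. -/
def CMcond (d m : ℕ) (H : AddSubmonoid (Fin d → ℤ)) : Prop :=
  ∀ g ∈ AddSubgroup.closure (H : Set (Fin d → ℤ)),
    ∃! a, a ∈ apery d m H ∧ inZE d m (g - a)

/-- The `j`-th coordinate projection `H_j = {σ_j(h) : h ∈ H}` of `H`, a submonoid of `ℤ`. -/
def projSg {d : ℕ} (H : AddSubmonoid (Fin d → ℤ)) (j : Fin d) : AddSubmonoid ℤ :=
  AddSubmonoid.map (Pi.evalAddMonoidHom (fun _ : Fin d => ℤ) j) H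

/-- The Apéry set `Ap(N, {m})` of a numerical semigroup `N` w.r.t. `m ∈ N`. -/
def aperyZ (m : ℕ) (N : AddSubmonoid ℤ) : Set ℤ := {x | x ∈ N ∧ x - (m : ℤ) ∉ N}

/-- The socle `Soc(N, {m})`: maximal elements of `Ap(N, {m})` w.r.t. `≤_N`. -/
def socZ (m : ℕ) (N : AddSubmonoid ℤ) : Set ℤ :=
  {x | x ∈ aperyZ m N ∧ ∀ y ∈ aperyZ m N, y - x ∈ N → x = y}

/-!
Fix a coordinate `j` and put `N = H_j`. Subtracting `m eᵢ` with `i ≠ j` from a lift of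
`n ∈ Ap(N,{m})` of minimal coordinate sum leaves `H` by minimality, and subtracting `m e_j`
leaves `H` because `n - m ∉ N`; so `Ap(N,{m})` lies in the projection of `Ap(H,E)`. The
projection has at most `m` elements and `Ap(N,{m})`, meeting every residue class mod `m`, at
least `m`; hence they coincide. Since every `w ∈ Ap(H,E)` other than `u` lies below `v`, the
socle of `N` is contained in `{u_j, v_j}`. If it is exactly `{u_j, v_j}` with `u_j ≠ v_j`,
then `v + m eᵢ = 2u` forces `i = j`: otherwise `v_j = 2u_j`, so `u_j ≤_N v_j` against the
maximality of `u_j`.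
-/

section NumericalSemigroup

variable {m : ℕ} {N : AddSubmonoid ℤ}

lemma exists_sub_eq_of_mem_closure {g : ℤ} (hg : g ∈ AddSubgroup.closure (N : Set ℤ)) :
    ∃ a ∈ N, ∃ b ∈ N, g = a - b := by
  induction hg using AddSubgroup.closure_induction with
  | mem x hx => exact ⟨x, hx, 0, N.zero_mem, by ring⟩
  | zero => exact ⟨0, N.zero_mem, 0, N.zero_mem, by ring⟩
  | add x y _ _ ihx ihy =>
      obtain ⟨a, ha, b, hb, rfl⟩ := ihx
      obtain ⟨c, hc, e, he, rfl⟩ := ihy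
      exact ⟨a + c, N.add_mem ha hc, b + e, N.add_mem hb he, by ring⟩
  | neg x _ ihx =>
      obtain ⟨a, ha, b, hb, rfl⟩ := ihx
      exact ⟨b, hb, a, ha, by ring⟩

lemma exists_mem_intCast_eq (hm : 0 < m) (hcl : AddSubgroup.closure (N : Set ℤ) = ⊤)
    (c : ZMod m) : ∃ x ∈ N, (x : ZMod m) = c := by
  obtain ⟨k, rfl⟩ : ∃ k, m = k + 1 := ⟨m - 1, by omega⟩
  obtain ⟨g, rfl⟩ := ZMod.intCast_surjective c
  obtain ⟨a, ha, b, hb, rfl⟩ := exists_sub_eq_of_mem_closure (hcl ▸ AddSubgroup.mem_top g)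
  refine ⟨a + k • b, N.add_mem ha (N.nsmul_mem hb k), ?_⟩
  rw [ZMod.intCast_eq_intCast_iff_dvd_sub]
  exact ⟨-b, by push_cast [nsmul_eq_mul]; ring⟩

lemma exists_mem_aperyZ_intCast_eq (hN : ∀ x ∈ N, 0 ≤ x) (hm : 0 < m)
    (hcl : AddSubgroup.closure (N : Set ℤ) = ⊤) (c : ZMod m) :
    ∃ x ∈ aperyZ m N, (x : ZMod m) = c := by
  obtain ⟨x, ⟨hxN, hxc⟩, hmin⟩ := (InvImage.wf Int.toNat wellFounded_lt).has_min
    {x | x ∈ N ∧ (x : ZMod m) = c} (exists_mem_intCast_eq hm hcl c)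
  refine ⟨x, ⟨hxN, fun hxm => hmin (x - m) ⟨hxm, by simp [hxc]⟩ ?_⟩, hxc⟩
  show (x - m).toNat < x.toNat
  have := hN _ hxm
  omega

lemma le_ncard_aperyZ (hN : ∀ x ∈ N, 0 ≤ x) (hm : 0 < m)
    (hcl : AddSubgroup.closure (N : Set ℤ) = ⊤) (hfin : (aperyZ m N).Finite) :
    m ≤ (aperyZ m N).ncard := by
  have himage : ((↑) '' aperyZ m N : Set (ZMod m)) = Set.univ :=
    Set.eq_univ_of_forall fun c => exists_mem_aperyZ_intCast_eq hN hm hcl c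
  calc m = (Set.univ : Set (ZMod m)).ncard := by rw [Set.ncard_univ, Nat.card_zmod]
    _ = ((↑) '' aperyZ m N : Set (ZMod m)).ncard := by rw [himage]
    _ ≤ (aperyZ m N).ncard := Set.ncard_image_le hfin

-- The largest element of the Apéry set is maximal for `≤_N` as well.
lemma socZ_nonempty (hN : ∀ x ∈ N, 0 ≤ x) (hm : 0 < m) (hfin : (aperyZ m N).Finite) :
    (socZ m N).Nonempty := by
  have h0 : (0 : ℤ) ∈ aperyZ m N := ⟨N.zero_mem, fun h => by have := hN _ h; omega⟩
  obtain ⟨a, ha, hmax⟩ := Set.exists_max_image _ id hfin ⟨0, h0⟩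
  exact ⟨a, ha, fun y hy hya => le_antisymm (by linarith [hN _ hya]) (hmax y hy)⟩

end NumericalSemigroup

section Projection

variable {d m : ℕ} {H : AddSubmonoid (Fin d → ℤ)} {j : Fin d}

lemma projSg_nonneg (hH : ∀ x ∈ H, ∀ i, 0 ≤ x i) : ∀ x ∈ projSg H j, 0 ≤ x := by
  rintro x ⟨h, hh, rfl⟩
  exact hH h hh j

lemma exists_mem_apery_apply_eq (hH : ∀ x ∈ H, ∀ i, 0 ≤ x i) {n : ℤ}
    (hn : n ∈ aperyZ m (projSg H j)) : ∃ a ∈ apery d m H, a j = n := by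
  have hm : m ≠ 0 := by rintro rfl; exact hn.2 (by simpa using hn.1)
  obtain ⟨a, ⟨haH, haj⟩, hmin⟩ :=
    (InvImage.wf (fun x : Fin d → ℤ => (∑ i, x i).toNat) wellFounded_lt).has_min
      {x | x ∈ H ∧ x j = n} (by obtain ⟨h, hh, rfl⟩ := hn.1; exact ⟨h, hh, rfl⟩)
  refine ⟨a, ⟨haH, fun i hi => ?_⟩, haj⟩
  by_cases hij : i = j
  · subst hij
    exact hn.2 ⟨_, hi, by simp [haj]⟩
  · refine hmin _ ⟨hi, by simp [Ne.symm hij, haj]⟩ ?_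
    have hsum : ∑ k, (a - Pi.single i (m : ℤ) : Fin d → ℤ) k = ∑ k, a k - m := by
      simp [Finset.sum_sub_distrib]
    have hpos : 0 ≤ ∑ k, (a - Pi.single i (m : ℤ) : Fin d → ℤ) k := Finset.sum_nonneg fun k _ => hH _ hi k
    show (∑ k, (a - Pi.single i (m : ℤ) : Fin d → ℤ) k).toNat < (∑ k, a k).toNat
    omega

lemma image_apery_eq_aperyZ (hH : ∀ x ∈ H, ∀ i, 0 ≤ x i) (hm : 0 < m)
    (hcl : AddSubgroup.closure (projSg H j : Set ℤ) = ⊤) (hap : (apery d m H).ncard = m) :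
    (fun x => x j) '' apery d m H = aperyZ m (projSg H j) := by
  have hfin : (apery d m H).Finite := Set.finite_of_ncard_pos (by rw [hap]; exact hm)
  have hsub : aperyZ m (projSg H j) ⊆ (fun x => x j) '' apery d m H :=
    fun n hn => exists_mem_apery_apply_eq hH hn
  refine (Set.eq_of_subset_of_ncard_le hsub ?_ (hfin.image _)).symm
  calc ((fun x => x j) '' apery d m H).ncard ≤ (apery d m H).ncard := Set.ncard_image_le hfin
    _ = m := hap
    _ ≤ (aperyZ m (projSg H j)).ncard :=
      le_ncard_aperyZ (projSg_nonneg hH) hm hcl ((hfin.image _).subset hsub)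

variable {u v : Fin d → ℤ}

lemma socZ_projSg_subset_pair (himage : (fun x => x j) '' apery d m H = aperyZ m (projSg H j))
    (hv : v ∈ apery d m H) (hmax : ∀ w ∈ apery d m H, w ≠ u → v - w ∈ H) :
    socZ m (projSg H j) ⊆ {u j, v j} := by
  rintro n ⟨hn, hnmax⟩
  rw [← himage] at hn
  obtain ⟨w, hw, rfl⟩ := hn
  by_cases hwu : w = u
  · exact Or.inl (by rw [hwu])
  · exact Or.inr (hnmax (v j) (himage ▸ ⟨v, hv, rfl⟩) ⟨v - w, hmax w hw hwu, rfl⟩)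

lemma two_mul_eq_add_of_socZ_eq_pair (hsocZ : socZ m (projSg H j) = {u j, v j})
    (huvj : u j ≠ v j) (hAG : ∃ i : Fin d, v + Pi.single i (m : ℤ) = u + u) :
    2 * u j = v j + m := by
  obtain ⟨i, hi⟩ := hAG
  have hij := congrFun hi j
  by_cases hji : j = i
  · subst hji
    simp only [Pi.add_apply, Pi.single_eq_same] at hij
    linarith
  · simp only [Pi.add_apply, Pi.single_apply, hji, if_false, add_zero] at hij
    have hu : u j ∈ socZ m (projSg H j) := hsocZ ▸ Set.mem_insert _ _
    have hv : v j ∈ socZ m (projSg H j) := hsocZ ▸ Set.mem_insert_of_mem _ rfl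
    exact absurd (hu.2 (v j) hv.1 (by rw [hij, add_sub_cancel_right]; exact hu.1.1)) huvj

end Projection

theorem projection_AG_general {d m : ℕ} (hm : 1 ≤ m)
    (H : AddSubmonoid (Fin d → ℤ)) (horth : IsOrthogonal d m H)
    (hap : (apery d m H).ncard = m)
    (hnum : ∀ j : Fin d, AddSubgroup.closure ((projSg H j : Set ℤ)) = ⊤)
    (u v : Fin d → ℤ)
    (hsoc : soc d m H = {u, v})
    (hAG : ∃ i : Fin d, v + Pi.single i (m : ℤ) = u + u)
    (hmax : ∀ w ∈ apery d m H, w ≠ u → v - w ∈ H) :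
    ∀ j : Fin d,
      (socZ m (projSg H j)).ncard = 1 ∨
      ∃ s z : ℤ, s ≠ z ∧ socZ m (projSg H j) = {s, z} ∧ 2 * s = z + (m : ℤ) := by
  intro j
  have himage := image_apery_eq_aperyZ horth.2.1 hm (hnum j) hap
  have hfin : (aperyZ m (projSg H j)).Finite :=
    himage ▸ (Set.finite_of_ncard_pos (by rw [hap]; exact hm)).image _
  have hv : v ∈ apery d m H := (hsoc ▸ Set.mem_insert_of_mem u rfl : v ∈ soc d m H).1
  rcases Set.subset_pair_iff_eq.1 (socZ_projSg_subset_pair himage hv hmax) with h | h | h | h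
  · exact absurd h (socZ_nonempty (projSg_nonneg horth.2.1) hm hfin).ne_empty
  · exact Or.inl (by rw [h, Set.ncard_singleton])
  · exact Or.inl (by rw [h, Set.ncard_singleton])
  · by_cases huvj : u j = v j
    · exact Or.inl (by rw [h, huvj, Set.pair_eq_singleton, Set.ncard_singleton])
    · exact Or.inr ⟨u j, v j, huvj, h, two_mul_eq_add_of_socZ_eq_pair h huvj hAG⟩

/-- Let `(H,E)` be a Cohen–Macaulay orthogonal semigroup of order `m`
with `|Ap(H,E)| = m` whose coordinate projections `H_j` are numerical semigroups.  If `H`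
is an AG semigroup of type two — `Soc(H,E) = {u,v}`, `u ≠ v`, `v + m eᵢ = 2u` for some
`i`, and `w ≤_H v` for every `w ∈ Ap(H,E)\{u}` — then every `H_j` is symmetric or
pseudo-symmetric: either `|Soc(H_j,{m})| = 1`, or `Soc(H_j,{m}) = {s,z}` with `s ≠ z`
and `2s = z + m`. -/
theorem projection_AG {d m : ℕ} (hd : 1 ≤ d) (hm : 1 ≤ m)
    (H : AddSubmonoid (Fin d → ℤ)) (horth : IsOrthogonal d m H)
    (hCM : CMcond d m H)
    (hap : (apery d m H).ncard = m)
    (hnum : ∀ j : Fin d, AddSubgroup.closure ((projSg H j : Set ℤ)) = ⊤)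
    (u v : Fin d → ℤ) (huv : u ≠ v)
    (hsoc : soc d m H = {u, v})
    (hAG : ∃ i : Fin d, v + Pi.single i (m : ℤ) = u + u)
    (hmax : ∀ w ∈ apery d m H, w ≠ u → v - w ∈ H) :
    ∀ j : Fin d,
      (socZ m (projSg H j)).ncard = 1 ∨
      ∃ s z : ℤ, s ≠ z ∧ socZ m (projSg H j) = {s, z} ∧ 2 * s = z + (m : ℤ) :=
  projection_AG_general hm H horth hap hnum u v hsoc hAG hmax

end AGpaper
end
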